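/- Let 0 < α < 1, β ∈ (0,1] and y ∈ C^{1,β}[0,T]. Then for every grid point t_n = nτ ∈ (0,T], the L1 approximation satisfies |D^α y(t_n) − δ^α_τ y(t_n)| ≤ C·[y']_{C^{0,β}[0,t_n]}·τ^{1+β-α}, where C = (1-n^{-α})/(4(β+1)Γ(1-α)) + α/Γ(3-α). -/

import Mathlib

open Real Set

/-- The piecewise linear interpolant of `y` on the uniform grid `t_j = j τ`. -/
noncomputable def linInterp (τ : ℝ) (y : ℝ → ℝ) (t : ℝ) : ℝ :=
  (t - (⌊t / τ⌋ : ℝ) * τ) / τ * y (((⌊t / τ⌋ : ℝ) + 1) * τ)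
    + (((⌊t / τ⌋ : ℝ) + 1) * τ - t) / τ * y ((⌊t / τ⌋ : ℝ) * τ)

/-- The Caputo derivative of order `α` (in the non-local difference form). -/
noncomputable def caputo (α : ℝ) (y : ℝ → ℝ) (t : ℝ) : ℝ :=
  (1 / Real.Gamma (1 - α)) * (y t - y 0) / t ^ α
    + (α / Real.Gamma (1 - α)) * ∫ s in (0:ℝ)..t, (y t - y s) / (t - s) ^ (1 + α)

/-! The two Caputo derivatives share the boundary term, since `I_τ y` agrees with `y` at `0` and
at `t_n`, so the error is `α / Γ(1 - α) · ∫₀^{t_n} (I_τ y - y)(s) (t_n - s)^{-1-α} ds`.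
On a cell `[t_j, t_j + τ]` the Hölder bound on `y'` gives
`|I_τ y - y|(s) ≤ H τ^β / (β + 1) · (s - t_j)(t_j + τ - s) / τ`. On `[0, t_{n-1}]` the product is
at most `τ² / 4` and the kernel integrates to `(τ^{-α} - t_n^{-α}) / α`; on the last cell, where the
kernel is singular, the factor `t_n - s` is kept and cancels one power of the kernel. -/

open MeasureTheory intervalIntegral

theorem linInterp_eq_of_mem_Icc {τ : ℝ} (hτ : 0 < τ) (y : ℝ → ℝ) {j : ℤ} {s : ℝ}
    (hs : s ∈ Icc (j * τ) (j * τ + τ)) :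
    linInterp τ y s = (s - j * τ) / τ * y (j * τ + τ) + (j * τ + τ - s) / τ * y (j * τ) := by
  rcases hs.2.lt_or_eq with hlt | rfl
  · have hfloor : ⌊s / τ⌋ = j := by
      rw [Int.floor_eq_iff, le_div_iff₀ hτ, div_lt_iff₀ hτ]
      constructor <;> linarith [hs.1]
    rw [linInterp, hfloor, add_one_mul]
  · have hfloor : ⌊(j * τ + τ) / τ⌋ = j + 1 := by
      rw [Int.floor_eq_iff, le_div_iff₀ hτ, div_lt_iff₀ hτ]
      push_cast
      constructor <;> linarith
    rw [linInterp, hfloor]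
    push_cast
    field_simp
    ring

theorem linInterp_grid {τ : ℝ} (hτ : 0 < τ) (y : ℝ → ℝ) (j : ℤ) :
    linInterp τ y (j * τ) = y (j * τ) := by
  rw [linInterp_eq_of_mem_Icc hτ y ⟨le_rfl, by linarith⟩]
  field_simp
  ring

theorem measurable_linInterp (τ : ℝ) (y : ℝ → ℝ) : Measurable (linInterp τ y) := by
  -- `y` need not be measurable: it is only evaluated at points indexed by `⌊t / τ⌋ : ℤ`.
  have hfloor : Measurable fun t : ℝ => ⌊t / τ⌋ := (measurable_id.div_const τ).floor
  have hcast : Measurable fun t : ℝ => (⌊t / τ⌋ : ℝ) := measurable_of_countable _ |>.comp hfloor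
  have hy0 : Measurable fun t : ℝ => y (⌊t / τ⌋ * τ) :=
    measurable_of_countable (fun j : ℤ => y (j * τ)) |>.comp hfloor
  have hy1 : Measurable fun t : ℝ => y ((⌊t / τ⌋ + 1) * τ) :=
    measurable_of_countable (fun j : ℤ => y ((j + 1) * τ)) |>.comp hfloor
  exact (((measurable_id.sub (hcast.mul_const τ)).div_const τ).mul hy1).add
    ((((hcast.add_const 1).mul_const τ).sub measurable_id).div_const τ |>.mul hy0)

theorem abs_interp_sub_le_of_holder {y y' : ℝ → ℝ} {a h s H β : ℝ} (hh : 0 < h) (hβ : 0 < β)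
    (hs : s ∈ Icc a (a + h))
    (hderiv : ∀ u ∈ Icc a (a + h), HasDerivAt y (y' u) u)
    (hHolder : ∀ u ∈ Icc a (a + h), ∀ v ∈ Icc a (a + h), |y' v - y' u| ≤ H * |v - u| ^ β) :
    |(s - a) / h * y (a + h) + (a + h - s) / h * y a - y s|
      ≤ H * h ^ β / (β + 1) * ((s - a) * (a + h - s) / h) := by
  set x := s - a with hx
  set z := a + h - s with hz
  have hx0 : 0 ≤ x := by linarith [hs.1]
  have hz0 : 0 ≤ z := by linarith [hs.2]
  set k := x * z / h with hk
  have hk0 : 0 ≤ k := by positivity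
  have hright (t : ℝ) (ht : t ∈ Icc (0:ℝ) 1) : s + z * t ∈ Icc a (a + h) :=
    ⟨by nlinarith [ht.1], by nlinarith [ht.2]⟩
  have hleft (t : ℝ) (ht : t ∈ Icc (0:ℝ) 1) : s - x * t ∈ Icc a (a + h) :=
    ⟨by nlinarith [ht.2], by nlinarith [ht.1]⟩
  -- The arguments `s + z t` and `s - x t` stay `h t` apart, so the Hölder bound gives
  -- `|φ' t| ≤ k H (h t) ^ β`, whose integral over `[0, 1]` is the claimed bound.
  set φ : ℝ → ℝ := fun t => x / h * (y (s + z * t) - y s) - z / h * (y s - y (s - x * t))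
  have hφ (t : ℝ) (ht : t ∈ Icc (0:ℝ) 1) :
      HasDerivAt φ (k * (y' (s + z * t) - y' (s - x * t))) t := by
    have hr := (hderiv _ (hright t ht)).comp t (((hasDerivAt_id t).const_mul z).const_add s)
    have hl := (hderiv _ (hleft t ht)).comp t (((hasDerivAt_id t).const_mul x).const_sub s)
    refine (((hr.sub_const (y s)).const_mul (x / h)).sub
      ((hl.const_sub (y s)).const_mul (z / h))).congr_deriv ?_
    simp only [hk]; ring
  set B : ℝ → ℝ := fun t => k * H * h ^ β / (β + 1) * t ^ (β + 1)
  have hB (t : ℝ) : HasDerivAt B (k * H * h ^ β * t ^ β) t := by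
    refine ((hasDerivAt_rpow_const (p := β + 1) (Or.inr (by linarith))).const_mul
      (k * H * h ^ β / (β + 1))).congr_deriv ?_
    rw [add_sub_cancel_right]; field_simp
  have hbound : ‖φ 1‖ ≤ B 1 := by
    refine image_norm_le_of_norm_deriv_right_le_deriv_boundary (f' := fun t =>
      k * (y' (s + z * t) - y' (s - x * t))) (fun t ht => ?_) (fun t ht => ?_) ?_ hB
      (fun t ht => ?_) ⟨zero_le_one, le_rfl⟩
    · exact (hφ t ht).continuousAt.continuousWithinAt
    · exact (hφ t (Ico_subset_Icc_self ht)).hasDerivWithinAt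
    · simp [φ, B, zero_rpow (by linarith : β + 1 ≠ 0)]
    · have ht' := Ico_subset_Icc_self ht
      have hgap : s + z * t - (s - x * t) = h * t := by simp only [hx, hz]; ring
      rw [Real.norm_eq_abs, abs_mul, abs_of_nonneg hk0, mul_assoc, mul_assoc,
        ← mul_rpow hh.le ht.1]
      gcongr
      simpa [hgap, abs_of_nonneg (mul_nonneg hh.le ht.1)] using
        hHolder _ (hleft t ht') _ (hright t ht')
  convert hbound using 1
  · simp only [φ, mul_one, hx, hz]
    congr 1
    field_simp
    ring_nf
  · simp only [B, one_rpow, mul_one, hk]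
    ring

theorem abs_sub_le_of_holder_deriv {y y' : ℝ → ℝ} {a b H β : ℝ} (hH : 0 ≤ H) (hβ : 0 ≤ β)
    (hderiv : ∀ u ∈ Icc a b, HasDerivAt y (y' u) u)
    (hHolder : ∀ u ∈ Icc a b, ∀ v ∈ Icc a b, |y' v - y' u| ≤ H * |v - u| ^ β)
    {s : ℝ} (hs : s ∈ Icc a b) :
    |y b - y s| ≤ (|y' a| + H * (b - a) ^ β) * (b - s) := by
  have ha : a ∈ Icc a b := ⟨le_rfl, hs.1.trans hs.2⟩
  have hbound (u : ℝ) (hu : u ∈ Icc a b) : ‖y' u‖ ≤ |y' a| + H * (b - a) ^ β := by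
    have hgap : |u - a| ^ β ≤ (b - a) ^ β := by
      rw [abs_of_nonneg (by linarith [hu.1])]
      exact rpow_le_rpow (by linarith [hu.1]) (by linarith [hu.2]) hβ
    rw [Real.norm_eq_abs]
    calc |y' u| ≤ |y' a| + |y' u - y' a| := by linarith [abs_sub_abs_le_abs_sub (y' u) (y' a)]
      _ ≤ _ := by gcongr; exact (hHolder a ha u hu).trans (by gcongr)
  simpa [abs_of_nonneg (sub_nonneg.2 hs.2)] using
    (convex_Icc a b).norm_image_sub_le_of_norm_hasDerivWithin_le
      (fun u hu => (hderiv u hu).hasDerivWithinAt) hbound hs ⟨ha.2, le_rfl⟩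

theorem div_rpow_one_add_self {v α : ℝ} (hv : 0 ≤ v) (hα : α ≠ 0) :
    v / v ^ (1 + α) = v ^ (-α) := by
  nth_rewrite 1 [← rpow_one v]
  rw [← rpow_sub' hv (by simpa using hα)]
  ring_nf

theorem mul_rpow_neg_self {v α : ℝ} (hv : 0 ≤ v) (hα : α ≠ 1) : v * v ^ (-α) = v ^ (1 - α) := by
  rw [sub_eq_add_neg, rpow_one_add' hv (by contrapose! hα; linarith)]

theorem intervalIntegrable_div_rpow_of_abs_le {w : ℝ → ℝ} {t α C : ℝ} (hα : α ∈ Ioo 0 1)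
    (ht : 0 ≤ t) (hw : AEStronglyMeasurable w (volume.restrict (Ioc 0 t)))
    (hbound : ∀ s ∈ Ioc 0 t, |w s| ≤ C * (t - s)) :
    IntervalIntegrable (fun s => w s / (t - s) ^ (1 + α)) volume 0 t := by
  have hdom : IntervalIntegrable (fun s => C * (t - s) ^ (-α)) volume 0 t := by
    simpa using ((intervalIntegrable_rpow' (a := 0) (b := t) (by linarith [hα.2])).comp_sub_left
      t).symm.const_mul C
  refine hdom.mono_fun' ?_ ?_
  · rw [uIoc_of_le ht]
    exact hw.div₀ ((continuous_const.sub continuous_id).rpow_const fun _ =>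
      Or.inr (by linarith [hα.1])).aestronglyMeasurable
  · rw [uIoc_of_le ht]
    refine ae_restrict_of_forall_mem measurableSet_Ioc fun s hs => ?_
    have hts : 0 ≤ t - s := sub_nonneg.2 hs.2
    dsimp only
    rw [Real.norm_eq_abs, abs_div, abs_of_nonneg (rpow_nonneg hts _), ← div_rpow_one_add_self hts
      hα.1.ne', ← mul_div_assoc]
    exact div_le_div_of_nonneg_right (hbound s hs) (rpow_nonneg hts _)

theorem caputo_sub_caputo {α t : ℝ} {y z : ℝ → ℝ} (h0 : z 0 = y 0) (ht : z t = y t)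
    (hy : IntervalIntegrable (fun s => (y t - y s) / (t - s) ^ (1 + α)) volume 0 t)
    (hzy : IntervalIntegrable (fun s => (z s - y s) / (t - s) ^ (1 + α)) volume 0 t) :
    caputo α y t - caputo α z t
      = α / Gamma (1 - α) * ∫ s in (0:ℝ)..t, (z s - y s) / (t - s) ^ (1 + α) := by
  have hz : (fun s => (y t - z s) / (t - s) ^ (1 + α))
      = fun s => (y t - y s) / (t - s) ^ (1 + α) - (z s - y s) / (t - s) ^ (1 + α) := by
    ext s; ring
  rw [caputo, caputo, h0, ht, hz, integral_sub hy hzy]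
  ring

theorem abs_integral_div_rpow_le_of_abs_le {w : ℝ → ℝ} {a b t α M : ℝ} (hα : 0 < α)
    (hab : a ≤ b) (hbt : b < t) (hw : ∀ s ∈ Ioc a b, |w s| ≤ M) :
    |∫ s in a..b, w s / (t - s) ^ (1 + α)| ≤ M * (((t - b) ^ (-α) - (t - a) ^ (-α)) / α) := by
  have hpos (s : ℝ) (hs : s ≤ b) : 0 < t - s := by linarith
  have hg : ∫ s in a..b, M * (t - s) ^ (-(1 + α))
      = M * (((t - b) ^ (-α) - (t - a) ^ (-α)) / α) := by
    rw [intervalIntegral.integral_const_mul, integral_comp_sub_left (fun u => u ^ (-(1 + α))),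
      integral_rpow (Or.inr ⟨by linarith, notMem_uIcc_of_lt (by linarith) (by linarith)⟩),
      show -(1 + α) + 1 = -α by ring, div_neg, ← neg_div, neg_sub]
  rw [← hg, ← Real.norm_eq_abs]
  refine norm_integral_le_of_norm_le hab (ae_of_all _ fun s hs => ?_) ?_
  · have hts := hpos s hs.2
    rw [rpow_neg hts.le, Real.norm_eq_abs, abs_div, abs_of_pos (rpow_pos_of_pos hts _),
      ← div_eq_mul_inv]
    exact div_le_div_of_nonneg_right (hw s hs) (rpow_nonneg hts.le _)
  · refine (continuousOn_const.mul ((continuousOn_const.sub continuousOn_id).rpow_const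
      fun s hs => Or.inl (hpos s ?_).ne')).intervalIntegrable
    rw [uIcc_of_le hab] at hs
    exact hs.2

theorem abs_integral_div_rpow_le_of_abs_le_mul {w : ℝ → ℝ} {t h α M : ℝ} (hα : α ∈ Ioo 0 1)
    (hh : 0 ≤ h) (hw : ∀ s ∈ Ioc (t - h) t, |w s| ≤ M * ((s - (t - h)) * (t - s))) :
    |∫ s in (t - h)..t, w s / (t - s) ^ (1 + α)| ≤ M * (h ^ (2 - α) / ((1 - α) * (2 - α))) := by
  obtain ⟨hα0, hα1⟩ := hα
  have hint (r : ℝ) (hr : -1 < r) : IntervalIntegrable (fun u : ℝ => u ^ r) volume 0 h :=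
    intervalIntegrable_rpow' hr
  have hg : ∫ s in (t - h)..t, M * (h * (t - s) ^ (-α) - (t - s) ^ (1 - α))
      = M * (h ^ (2 - α) / ((1 - α) * (2 - α))) := by
    rw [integral_comp_sub_left (fun u => M * (h * u ^ (-α) - u ^ (1 - α))), sub_self,
      sub_sub_cancel, intervalIntegral.integral_const_mul,
      integral_sub ((hint _ (by linarith)).const_mul h) (hint _ (by linarith)),
      intervalIntegral.integral_const_mul, integral_rpow (Or.inl (by linarith)),
      integral_rpow (Or.inl (by linarith)), zero_rpow (by linarith), zero_rpow (by linarith),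
      show -α + 1 = 1 - α by ring, show 1 - α + 1 = 2 - α by ring, sub_zero, sub_zero,
      mul_div_assoc', ← rpow_one_add' hh (by linarith), show 1 + (1 - α) = 2 - α by ring]
    have h1 : 1 - α ≠ 0 := by linarith
    have h2 : 2 - α ≠ 0 := by linarith
    field_simp
    ring
  rw [← hg, ← Real.norm_eq_abs]
  refine norm_integral_le_of_norm_le (by linarith : t - h ≤ t) (ae_of_all _ fun s hs => ?_) ?_
  · have hts : 0 ≤ t - s := by linarith [hs.2]
    rw [Real.norm_eq_abs, abs_div, abs_of_nonneg (rpow_nonneg hts _)]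
    calc |w s| / (t - s) ^ (1 + α) ≤ M * ((s - (t - h)) * (t - s)) / (t - s) ^ (1 + α) :=
          div_le_div_of_nonneg_right (hw s hs) (rpow_nonneg hts _)
      _ = M * (h * (t - s) ^ (-α) - (t - s) ^ (1 - α)) := by
        rw [mul_div_assoc, mul_div_assoc, div_rpow_one_add_self hts hα0.ne',
          ← mul_rpow_neg_self hts hα1.ne]
        ring
  · simpa using ((((hint _ (by linarith)).const_mul h).sub (hint _ (by linarith))).const_mul
      M).comp_sub_left t |>.symm

section Grid

variable {τ H β : ℝ} {y y' : ℝ → ℝ} {n : ℕ}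

theorem exists_cell_of_mem_Icc (hτ : 0 < τ) (hn : 1 ≤ n) {s : ℝ} (hs : s ∈ Icc 0 (n * τ)) :
    ∃ j : ℤ, 0 ≤ j ∧ j + 1 ≤ n ∧ s ∈ Icc (j * τ) (j * τ + τ) := by
  rcases hs.2.lt_or_eq with hlt | rfl
  · refine ⟨⌊s / τ⌋, Int.floor_nonneg.2 (div_nonneg hs.1 hτ.le), ?_, ?_, ?_⟩
    · exact Int.floor_lt.2 (by rw [div_lt_iff₀ hτ]; exact_mod_cast hlt)
    · exact (le_div_iff₀ hτ).1 (Int.floor_le _)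
    · have := (div_lt_iff₀ hτ).1 (Int.lt_floor_add_one (s / τ))
      linarith
  · refine ⟨n - 1, by omega, by omega, ?_⟩
    push_cast
    constructor <;> linarith

theorem abs_linInterp_sub_le_of_mem_cell (hτ : 0 < τ) (hβ : 0 < β)
    (hderiv : ∀ u ∈ Icc 0 (n * τ), HasDerivAt y (y' u) u)
    (hHolder : ∀ u ∈ Icc 0 (n * τ), ∀ v ∈ Icc 0 (n * τ), |y' v - y' u| ≤ H * |v - u| ^ β)
    {j : ℤ} (hj0 : 0 ≤ j) (hjn : j + 1 ≤ n) {s : ℝ}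
    (hs : s ∈ Icc (j * τ) (j * τ + τ)) :
    |linInterp τ y s - y s| ≤ H * τ ^ β / (β + 1) * ((s - j * τ) * (j * τ + τ - s) / τ) := by
  have hj0' : (0 : ℝ) ≤ j := by exact_mod_cast hj0
  have hjn' : (j : ℝ) + 1 ≤ n := by exact_mod_cast hjn
  have hsub : Icc (j * τ) (j * τ + τ) ⊆ Icc 0 (n * τ) :=
    Icc_subset_Icc (by positivity) (by nlinarith)
  rw [linInterp_eq_of_mem_Icc hτ y hs]
  exact abs_interp_sub_le_of_holder hτ hβ hs (fun u hu => hderiv u (hsub hu))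
    (fun u hu v hv => hHolder u (hsub hu) v (hsub hv))

theorem abs_linInterp_sub_le_const (hτ : 0 < τ) (hβ : 0 < β)
    (hderiv : ∀ u ∈ Icc 0 (n * τ), HasDerivAt y (y' u) u)
    (hHolder : ∀ u ∈ Icc 0 (n * τ), ∀ v ∈ Icc 0 (n * τ), |y' v - y' u| ≤ H * |v - u| ^ β)
    (hH : 0 ≤ H) (hn : 1 ≤ n) {s : ℝ} (hs : s ∈ Icc 0 (n * τ)) :
    |linInterp τ y s - y s| ≤ H * τ ^ β / (β + 1) * (τ / 4) := by
  obtain ⟨j, hj0, hjn, hsj⟩ := exists_cell_of_mem_Icc hτ hn hs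
  refine (abs_linInterp_sub_le_of_mem_cell hτ hβ hderiv hHolder hj0 hjn hsj).trans
    (mul_le_mul_of_nonneg_left ?_ (by positivity))
  rw [div_le_iff₀ hτ]
  nlinarith [sq_nonneg (s - j * τ - (j * τ + τ - s))]

theorem abs_linInterp_sub_le_mul_sub (hτ : 0 < τ) (hβ : 0 < β)
    (hderiv : ∀ u ∈ Icc 0 (n * τ), HasDerivAt y (y' u) u)
    (hHolder : ∀ u ∈ Icc 0 (n * τ), ∀ v ∈ Icc 0 (n * τ), |y' v - y' u| ≤ H * |v - u| ^ β)
    (hH : 0 ≤ H) (hn : 1 ≤ n) {s : ℝ} (hs : s ∈ Icc 0 (n * τ)) :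
    |linInterp τ y s - y s| ≤ H * τ ^ β / (β + 1) * (n * τ - s) := by
  obtain ⟨j, hj0, hjn, hsj⟩ := exists_cell_of_mem_Icc hτ hn hs
  refine (abs_linInterp_sub_le_of_mem_cell hτ hβ hderiv hHolder hj0 hjn hsj).trans
    (mul_le_mul_of_nonneg_left ?_ (by positivity))
  have hjn' : (j : ℝ) + 1 ≤ n := by exact_mod_cast hjn
  have hright : j * τ + τ - s ≤ n * τ - s := by nlinarith
  rw [div_le_iff₀ hτ]
  nlinarith [hsj.1, hsj.2]

theorem abs_linInterp_sub_le_last_cell (hτ : 0 < τ) (hβ : 0 < β)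
    (hderiv : ∀ u ∈ Icc 0 (n * τ), HasDerivAt y (y' u) u)
    (hHolder : ∀ u ∈ Icc 0 (n * τ), ∀ v ∈ Icc 0 (n * τ), |y' v - y' u| ≤ H * |v - u| ^ β)
    (hn : 1 ≤ n) {s : ℝ} (hs : s ∈ Icc (n * τ - τ) (n * τ)) :
    |linInterp τ y s - y s|
      ≤ H * τ ^ β / (β + 1) / τ * ((s - (n * τ - τ)) * (n * τ - s)) := by
  have hcell : (((n : ℤ) - 1 : ℤ) : ℝ) * τ = n * τ - τ := by push_cast; ring
  have := abs_linInterp_sub_le_of_mem_cell hτ hβ hderiv hHolder (j := n - 1) (by omega) (by omega)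
    (by rw [hcell, sub_add_cancel]; exact hs)
  rw [hcell, sub_add_cancel] at this
  exact this.trans_eq (by ring)

end Grid

theorem caputo_sub_caputo_linInterp {α β H τ : ℝ} {y y' : ℝ → ℝ} {n : ℕ} (hα : α ∈ Ioo 0 1)
    (hβ : 0 < β) (hτ : 0 < τ) (hH : 0 ≤ H) (hn : 1 ≤ n)
    (hderiv : ∀ u ∈ Icc 0 (n * τ), HasDerivAt y (y' u) u)
    (hHolder : ∀ u ∈ Icc 0 (n * τ), ∀ v ∈ Icc 0 (n * τ), |y' v - y' u| ≤ H * |v - u| ^ β) :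
    caputo α y (n * τ) - caputo α (linInterp τ y) (n * τ)
      = α / Gamma (1 - α) * ((∫ s in (0:ℝ)..n * τ - τ,
          (linInterp τ y s - y s) / (n * τ - s) ^ (1 + α))
        + ∫ s in (n * τ - τ)..n * τ, (linInterp τ y s - y s) / (n * τ - s) ^ (1 + α)) := by
  have hn' : (1 : ℝ) ≤ n := by exact_mod_cast hn
  have hτn : τ ≤ n * τ := by nlinarith
  have hy : AEStronglyMeasurable y (volume.restrict (Ioc 0 (n * τ))) :=
    (ContinuousOn.aestronglyMeasurable (fun u hu => (hderiv u hu).continuousAt.continuousWithinAt)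
      measurableSet_Icc).mono_set Ioc_subset_Icc_self
  have hy_int := intervalIntegrable_div_rpow_of_abs_le (w := fun s => y (n * τ) - y s) hα
    (by linarith) (aestronglyMeasurable_const.sub hy)
    fun s hs => abs_sub_le_of_holder_deriv hH hβ.le hderiv hHolder (Ioc_subset_Icc_self hs)
  have he_int := intervalIntegrable_div_rpow_of_abs_le (w := fun s => linInterp τ y s - y s) hα
    (by linarith) ((measurable_linInterp τ y).aestronglyMeasurable.sub hy)
    fun s hs => abs_linInterp_sub_le_mul_sub hτ hβ hderiv hHolder hH hn (Ioc_subset_Icc_self hs)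
  have hgrid (j : ℕ) : linInterp τ y (j * τ) = y (j * τ) := by
    exact_mod_cast linInterp_grid hτ y j
  have hmid : n * τ - τ ∈ uIcc 0 (n * τ) := by
    rw [uIcc_of_le (by linarith)]; constructor <;> linarith
  rw [caputo_sub_caputo (by simpa using hgrid 0) (hgrid n) hy_int he_int,
    ← integral_add_adjacent_intervals (he_int.mono_set (uIcc_subset_uIcc_left hmid))
      (he_int.mono_set (uIcc_subset_uIcc_right hmid))]

theorem L1_error_bound_le {α β H τ n : ℝ} (hα : α ∈ Ioo 0 1) (hβ : 0 < β) (hτ : 0 < τ)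
    (hH : 0 ≤ H) (hn : 0 < n) :
    α / Gamma (1 - α) * (H * τ ^ β / (β + 1) * (τ / 4) * ((τ ^ (-α) - (n * τ) ^ (-α)) / α)
        + H * τ ^ β / (β + 1) / τ * (τ ^ (2 - α) / ((1 - α) * (2 - α))))
      ≤ ((1 - n ^ (-α)) / (4 * (β + 1) * Gamma (1 - α)) + α / Gamma (3 - α))
        * H * τ ^ (1 + β - α) := by
  obtain ⟨hα0, hα1⟩ := hα
  have h1 : 1 - α ≠ 0 := by linarith
  have h2 : 2 - α ≠ 0 := by linarith
  have hΓ : Gamma (1 - α) ≠ 0 := (Gamma_pos_of_pos (by linarith)).ne'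
  have hΓ3 : Gamma (3 - α) = (2 - α) * ((1 - α) * Gamma (1 - α)) := by
    rw [show 3 - α = (2 - α) + 1 by ring, Gamma_add_one h2, show 2 - α = (1 - α) + 1 by ring,
      Gamma_add_one h1]
  have hp : τ ^ (1 + β - α) = τ ^ β * τ * τ ^ (-α) := by
    rw [show 1 + β - α = β + 1 + -α by ring, rpow_add hτ, rpow_add_one hτ.ne']
  have hp2 : τ ^ (2 - α) = τ * τ * τ ^ (-α) := by
    rw [show 2 - α = 1 + 1 + -α by ring, rpow_add hτ, rpow_add_one hτ.ne', rpow_one]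
  calc
    _ = (1 - n ^ (-α)) / (4 * (β + 1) * Gamma (1 - α)) * H * τ ^ (1 + β - α)
        + α / Gamma (3 - α) * H * τ ^ (1 + β - α) / (β + 1) := by
      rw [hΓ3, hp, hp2, mul_rpow hn.le hτ.le]
      field_simp
    _ ≤ _ := by
      have hΓ3pos : 0 < Gamma (3 - α) := Gamma_pos_of_pos (by linarith)
      rw [add_mul, add_mul]
      gcongr
      exact div_le_self (by positivity) (by linarith)

/-- L1 truncation error for C^{1,β} functions, with explicit constant. -/
theorem L1_truncation_C1_holder
    (T α β H τ : ℝ) (y y' : ℝ → ℝ) (n : ℕ)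
    (hα : α ∈ Ioo (0:ℝ) 1) (hβ : β ∈ Ioc (0:ℝ) 1) (hτ : 0 < τ) (hH : 0 ≤ H)
    (hn : 1 ≤ n) (hT : (n : ℝ) * τ ≤ T)
    (hderiv : ∀ u ∈ Icc (0:ℝ) T, HasDerivAt y (y' u) u)
    (hHolder : ∀ s ∈ Icc (0:ℝ) ((n : ℝ) * τ), ∀ t ∈ Icc (0:ℝ) ((n : ℝ) * τ),
        |y' t - y' s| ≤ H * |t - s| ^ β) :
    |caputo α y ((n : ℝ) * τ) - caputo α (linInterp τ y) ((n : ℝ) * τ)|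
      ≤ ((1 - (n : ℝ) ^ (-α)) / (4 * (β + 1) * Real.Gamma (1 - α))
          + α / Real.Gamma (3 - α))
        * H * τ ^ (1 + β - α) := by
  have hn' : (1 : ℝ) ≤ n := by exact_mod_cast hn
  have hderiv' (u : ℝ) (hu : u ∈ Icc 0 (n * τ)) : HasDerivAt y (y' u) u :=
    hderiv u ⟨hu.1, hu.2.trans hT⟩
  rw [caputo_sub_caputo_linInterp hα hβ.1 hτ hH hn hderiv' hHolder]
  have h1 := abs_integral_div_rpow_le_of_abs_le (a := 0) (b := n * τ - τ) (t := n * τ) hα.1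
    (by nlinarith) (by linarith)
    fun s hs => abs_linInterp_sub_le_const hτ hβ.1 hderiv' hHolder hH hn
      ⟨hs.1.le, by linarith [hs.2]⟩
  rw [sub_sub_cancel, sub_zero] at h1
  have h2 := abs_integral_div_rpow_le_of_abs_le_mul hα hτ.le
    fun s hs => abs_linInterp_sub_le_last_cell hτ hβ.1 hderiv' hHolder hn (Ioc_subset_Icc_self hs)
  have hc : 0 ≤ α / Gamma (1 - α) := div_nonneg hα.1.le (Gamma_pos_of_pos (by linarith [hα.2])).le
  rw [abs_mul, abs_of_nonneg hc]
  refine (mul_le_mul_of_nonneg_left ((abs_add_le _ _).trans (add_le_add h1 h2)) hc).trans ?_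
  exact L1_error_bound_le hα hβ.1 hτ hH (by positivity)
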